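/- Let μ > 0 and for ω > μ²/4 define Q_{ω,μ}(x) = (3ω)^{1/4} · (sech(2√ω·|x| + arctanh(μ/(2√ω))))^{1/2}. Then for every ω > μ²/4 one has the explicit mass formula ∫_ℝ Q_{ω,μ}(x)² dx = √3·(π/2 − arcsin(μ/(2√ω))); consequently, for every M with 0 < M < (√3·π/2)^{1/2} there exists a unique ω > μ²/4 such that ∫_ℝ Q_{ω,μ}(x)² dx = M². -/

import Mathlib

open Real MeasureTheory

/-- The inverse hyperbolic tangent: `arctanh y = (1/2) log((1+y)/(1−y))`. -/
noncomputable def arctanh (y : ℝ) : ℝ := (1 / 2) * Real.log ((1 + y) / (1 - y))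

/-- The solitary-wave profile of the quintic NLS with attractive delta potential:
`Q_{ω,μ}(x) = (3ω)^{1/4}(sech(2√ω|x| + arctanh(μ/(2√ω))))^{1/2}`. -/
noncomputable def Qsol (μ ω x : ℝ) : ℝ :=
  (3 * ω) ^ ((1 : ℝ) / 4) *
    (1 / Real.cosh (2 * Real.sqrt ω * |x| + arctanh (μ / (2 * Real.sqrt ω)))) ^ ((1 : ℝ) / 2)

lemma tendsto_sinh_atTop' : Filter.Tendsto Real.sinh Filter.atTop Filter.atTop := by
  have h : Filter.Tendsto (fun x : ℝ => Real.exp x + (-Real.exp (-x)))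
      Filter.atTop Filter.atTop :=
    Real.tendsto_exp_atTop.atTop_add Real.tendsto_exp_neg_atTop_nhds_zero.neg
  have := h.atTop_div_const (two_pos)
  refine this.congr fun x => ?_
  rw [Real.sinh_eq]; ring

/-- `∫₀^∞ sech(cx + a) dx = (1/c)(π/2 − arctan(sinh a))`. -/
lemma sech_integral (c a : ℝ) (hc : 0 < c) :
    ∫ x in Set.Ioi (0 : ℝ), 1 / Real.cosh (c * x + a) =
      (1 / c) * (Real.pi / 2 - Real.arctan (Real.sinh a)) := by
  have hderiv : ∀ x ∈ Set.Ici (0 : ℝ),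
      HasDerivAt (fun x => (1 / c) * Real.arctan (Real.sinh (c * x + a)))
        (1 / Real.cosh (c * x + a)) x := by
    intro x _
    have h1 : HasDerivAt (fun x : ℝ => c * x + a) c x := by
      simpa using ((hasDerivAt_id x).const_mul c).add_const a
    have h2 : HasDerivAt (fun x : ℝ => Real.sinh (c * x + a))
        (Real.cosh (c * x + a) * c) x := (Real.hasDerivAt_sinh _).comp x h1
    have h3 : HasDerivAt (fun x : ℝ => Real.arctan (Real.sinh (c * x + a)))
        ((1 / (1 + Real.sinh (c * x + a) ^ 2)) * (Real.cosh (c * x + a) * c)) x :=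
      (Real.hasDerivAt_arctan _).comp x h2
    have h4 := h3.const_mul (1 / c)
    refine h4.congr_deriv ?_
    have hch := Real.cosh_pos (c * x + a)
    have hsq : 1 + Real.sinh (c * x + a) ^ 2 = Real.cosh (c * x + a) ^ 2 := by
      rw [Real.cosh_sq]; ring
    rw [hsq]
    field_simp
  have hnonneg : ∀ x ∈ Set.Ioi (0 : ℝ), 0 ≤ 1 / Real.cosh (c * x + a) := fun x _ =>
    le_of_lt (by positivity)
  have hT : Filter.Tendsto (fun x => (1 / c) * Real.arctan (Real.sinh (c * x + a)))
      Filter.atTop (nhds ((1 / c) * (Real.pi / 2))) := by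
    have T1 : Filter.Tendsto (fun x : ℝ => c * x + a) Filter.atTop Filter.atTop :=
      Filter.tendsto_atTop_add_const_right _ a (Filter.tendsto_id.const_mul_atTop hc)
    have T2 := tendsto_sinh_atTop'.comp T1
    have T3 := (Real.tendsto_arctan_atTop.mono_right nhdsWithin_le_nhds).comp T2
    exact T3.const_mul (1 / c)
  have := integral_Ioi_of_hasDerivAt_of_nonneg' hderiv hnonneg hT
  rw [this]
  simp only [mul_zero, zero_add]
  ring

lemma tanh_arctanh {t : ℝ} (h0 : -1 < t) (h1 : t < 1) : Real.tanh (arctanh t) = t := by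
  have h1t : (0 : ℝ) < 1 - t := by linarith
  have h1t' : (0 : ℝ) < 1 + t := by linarith
  have hrpos : 0 < (1 + t) / (1 - t) := div_pos h1t' h1t
  have hspos : 0 < Real.sqrt ((1 + t) / (1 - t)) := Real.sqrt_pos.2 hrpos
  have harc : arctanh t = Real.log (Real.sqrt ((1 + t) / (1 - t))) := by
    rw [Real.log_sqrt hrpos.le, arctanh]; ring
  rw [harc, Real.tanh_eq_sinh_div_cosh, Real.sinh_log hspos, Real.cosh_log hspos]
  have hsq : Real.sqrt ((1 + t) / (1 - t)) ^ 2 = (1 + t) / (1 - t) :=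
    Real.sq_sqrt hrpos.le
  have hne : Real.sqrt ((1 + t) / (1 - t)) ≠ 0 := ne_of_gt hspos
  have hden : Real.sqrt ((1 + t) / (1 - t)) + (Real.sqrt ((1 + t) / (1 - t)))⁻¹ ≠ 0 := by
    positivity
  have hhalf : ∀ A B : ℝ, B ≠ 0 → A / 2 / (B / 2) = A / B := by
    intro A B hB; field_simp
  rw [hhalf _ _ hden, div_eq_iff hden]
  field_simp
  rw [hsq]
  field_simp
  ring

lemma arctan_sinh (a : ℝ) : Real.arctan (Real.sinh a) = Real.arcsin (Real.tanh a) := by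
  rw [Real.arctan_eq_arcsin, Real.tanh_eq_sinh_div_cosh]
  congr 1
  have h : 1 + Real.sinh a ^ 2 = Real.cosh a ^ 2 := by rw [Real.cosh_sq]; ring
  rw [h, Real.sqrt_sq (Real.cosh_pos a).le]

/-- The mass formula for a single `ω`. -/
lemma mass_formula (μ : ℝ) (hμ : 0 < μ) (ω : ℝ) (hω : μ ^ 2 / 4 < ω) :
    (∫ x : ℝ, (Qsol μ ω x) ^ 2) =
      Real.sqrt 3 * (Real.pi / 2 - Real.arcsin (μ / (2 * Real.sqrt ω))) := by
  have hωpos : 0 < ω := lt_of_le_of_lt (by positivity) hω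
  have hw : 0 < Real.sqrt ω := Real.sqrt_pos.2 hωpos
  have hμw : μ / 2 < Real.sqrt ω := by
    rw [show μ / 2 = Real.sqrt (μ ^ 2 / 4) by
      rw [show μ ^ 2 / 4 = (μ / 2) ^ 2 by ring, Real.sqrt_sq (by positivity)]]
    exact Real.sqrt_lt_sqrt (by positivity) hω
  set t : ℝ := μ / (2 * Real.sqrt ω) with ht
  have htpos : 0 < t := by positivity
  have htlt : t < 1 := by
    rw [ht, div_lt_one (by positivity)]
    linarith
  set a : ℝ := arctanh t with ha
  set c : ℝ := 2 * Real.sqrt ω with hcdef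
  have hcpos : 0 < c := by positivity
  have hQ : ∀ x : ℝ, (Qsol μ ω x) ^ 2 =
      (fun y => Real.sqrt (3 * ω) * (1 / Real.cosh (c * y + a))) |x| := by
    intro x
    simp only [Qsol, mul_pow]
    have h1 : ((3 * ω) ^ ((1 : ℝ) / 4)) ^ 2 = Real.sqrt (3 * ω) := by
      rw [← Real.rpow_natCast ((3 * ω) ^ ((1 : ℝ) / 4)) 2,
        ← Real.rpow_mul (by positivity), Real.sqrt_eq_rpow]
      norm_num
    have hch : (0 : ℝ) < Real.cosh (c * |x| + a) := Real.cosh_pos _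
    have h2 : ((1 / Real.cosh (c * |x| + a)) ^ ((1 : ℝ) / 2)) ^ 2 =
        1 / Real.cosh (c * |x| + a) := by
      rw [← Real.rpow_natCast ((1 / Real.cosh (c * |x| + a)) ^ ((1 : ℝ) / 2)) 2,
        ← Real.rpow_mul (by positivity)]
      norm_num
    rw [h1, h2]
  calc (∫ x : ℝ, (Qsol μ ω x) ^ 2)
      = ∫ x : ℝ, (fun y => Real.sqrt (3 * ω) * (1 / Real.cosh (c * y + a))) |x| := by
        exact integral_congr_ae (Filter.Eventually.of_forall hQ)
    _ = 2 * ∫ x in Set.Ioi (0 : ℝ), Real.sqrt (3 * ω) * (1 / Real.cosh (c * x + a)) :=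
        integral_comp_abs (f := fun y => Real.sqrt (3 * ω) * (1 / Real.cosh (c * y + a)))
    _ = 2 * (Real.sqrt (3 * ω) * ∫ x in Set.Ioi (0 : ℝ), 1 / Real.cosh (c * x + a)) := by
        rw [integral_const_mul]
    _ = 2 * (Real.sqrt (3 * ω) * ((1 / c) * (Real.pi / 2 - Real.arctan (Real.sinh a)))) := by
        rw [sech_integral c a hcpos]
    _ = Real.sqrt 3 * (Real.pi / 2 - Real.arcsin t) := by
        rw [arctan_sinh, show Real.tanh a = t from tanh_arctanh (by linarith) htlt,
          Real.sqrt_mul (by norm_num : (0:ℝ) ≤ 3) ω]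
        rw [hcdef]
        field_simp

set_option maxHeartbeats 1000000 in
/-- Mass formula for the delta solitons, `∫ Q_{ω,μ}² = √3(π/2 − arcsin(μ/(2√ω)))`,
and existence of a unique `ω > μ²/4` realizing each subcritical mass level
`M² < √3·π/2 = ‖Q‖_{L²}²`. -/
theorem delta_soliton_mass (μ : ℝ) (hμ : 0 < μ) :
    (∀ ω : ℝ, μ ^ 2 / 4 < ω →
      (∫ x : ℝ, (Qsol μ ω x) ^ 2) =
        Real.sqrt 3 * (Real.pi / 2 - Real.arcsin (μ / (2 * Real.sqrt ω)))) ∧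
    ∀ M : ℝ, 0 < M → M < Real.sqrt (Real.sqrt 3 * Real.pi / 2) →
      ∃! ω : ℝ, μ ^ 2 / 4 < ω ∧ (∫ x : ℝ, (Qsol μ ω x) ^ 2) = M ^ 2 := by
  constructor
  · exact fun ω hω => mass_formula μ hμ ω hω
  intro M hM hMlt
  set lo : ℝ := μ ^ 2 / 4 with hlo
  have hlopos : 0 < lo := by positivity
  set F : ℝ → ℝ := fun ω => Real.sqrt 3 * (Real.pi / 2 - Real.arcsin (μ / (2 * Real.sqrt ω)))
    with hF
  have hs3 : (0 : ℝ) < Real.sqrt 3 := Real.sqrt_pos.2 (by norm_num)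
  -- t(ω) = μ/(2√ω) ∈ (0,1] for ω ≥ lo
  have htle : ∀ ω : ℝ, lo ≤ ω → μ / (2 * Real.sqrt ω) ≤ 1 := by
    intro ω hω
    have hωpos : 0 < ω := lt_of_lt_of_le hlopos hω
    have : μ / 2 ≤ Real.sqrt ω := by
      rw [show μ / 2 = Real.sqrt (μ ^ 2 / 4) by
        rw [show μ ^ 2 / 4 = (μ / 2) ^ 2 by ring, Real.sqrt_sq (by positivity)]]
      exact Real.sqrt_le_sqrt hω
    rw [div_le_one (by positivity)]
    linarith
  have htpos : ∀ ω : ℝ, lo ≤ ω → 0 < μ / (2 * Real.sqrt ω) := by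
    intro ω hω
    have hωpos : 0 < ω := lt_of_lt_of_le hlopos hω
    have := Real.sqrt_pos.2 hωpos
    positivity
  -- F is strictly monotone on Ici lo
  have hmono : StrictMonoOn F (Set.Ici lo) := by
    intro a ha b hb hab
    have hapos : 0 < a := lt_of_lt_of_le hlopos ha
    have hsa : 0 < Real.sqrt a := Real.sqrt_pos.2 hapos
    have hsb : 0 < Real.sqrt b := Real.sqrt_pos.2 (lt_of_lt_of_le hlopos hb)
    have hsab : Real.sqrt a < Real.sqrt b := Real.sqrt_lt_sqrt hapos.le hab
    have hlt : μ / (2 * Real.sqrt b) < μ / (2 * Real.sqrt a) :=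
      div_lt_div_of_pos_left hμ (by positivity) (by linarith)
    have harc : Real.arcsin (μ / (2 * Real.sqrt b)) < Real.arcsin (μ / (2 * Real.sqrt a)) :=
      Real.strictMonoOn_arcsin
        ⟨by linarith [htpos b hb], htle b hb⟩
        ⟨by linarith [htpos a ha], htle a ha⟩ hlt
    simp only [hF]
    have : Real.pi / 2 - Real.arcsin (μ / (2 * Real.sqrt a)) <
        Real.pi / 2 - Real.arcsin (μ / (2 * Real.sqrt b)) := by linarith
    exact (mul_lt_mul_iff_right₀ hs3).2 this
  -- F is continuous on Ici lo
  have hcont : ContinuousOn F (Set.Ici lo) := by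
    apply (continuous_const.continuousOn).mul
    apply ContinuousOn.sub continuousOn_const
    apply Real.continuous_arcsin.comp_continuousOn
    apply ContinuousOn.div continuousOn_const
      ((continuous_const.mul Real.continuous_sqrt).continuousOn)
    intro ω hω
    have : 0 < Real.sqrt ω := Real.sqrt_pos.2 (lt_of_lt_of_le hlopos hω)
    exact (mul_pos two_pos this).ne'
  -- F lo = 0
  have hFlo : F lo = 0 := by
    simp only [hF, hlo]
    rw [show μ ^ 2 / 4 = (μ / 2) ^ 2 by ring, Real.sqrt_sq (by positivity)]
    rw [show μ / (2 * (μ / 2)) = 1 by field_simp]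
    rw [Real.arcsin_one]
    ring
  -- M² < √3 π/2
  have hM2 : M ^ 2 < Real.sqrt 3 * Real.pi / 2 := by
    have h0 : (0 : ℝ) ≤ Real.sqrt 3 * Real.pi / 2 := by positivity
    calc M ^ 2 < Real.sqrt (Real.sqrt 3 * Real.pi / 2) ^ 2 := by
          apply pow_lt_pow_left₀ hMlt hM.le (by norm_num)
        _ = Real.sqrt 3 * Real.pi / 2 := Real.sq_sqrt h0
  -- choose ε
  set ε : ℝ := Real.pi / 2 - M ^ 2 / Real.sqrt 3 with hε
  have hεpos : 0 < ε := by
    rw [hε, sub_pos, div_lt_iff₀ hs3]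
    linarith [hM2]
  have hεle : ε < Real.pi / 2 := by
    have : 0 < M ^ 2 / Real.sqrt 3 := by positivity
    rw [hε]; linarith
  set s : ℝ := Real.sin (ε / 2) with hs
  clear_value s
  clear_value ε
  have hspos : 0 < s := by
    rw [hs]
    exact Real.sin_pos_of_pos_of_lt_pi (by linarith) (by linarith [Real.pi_pos])
  set hi : ℝ := max (μ ^ 2 / (4 * s ^ 2)) (lo + 1) with hhi
  have hhi_gt : lo < hi := lt_of_lt_of_le (by linarith) (le_max_right _ _)
  -- at hi, arcsin ≤ ε/2
  have hFhi : M ^ 2 < F hi := by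
    have hhipos : 0 < hi := lt_trans hlopos hhi_gt
    have hshi : μ / (2 * s) ≤ Real.sqrt hi := by
      have h1 : μ ^ 2 / (4 * s ^ 2) ≤ hi := le_max_left _ _
      have : Real.sqrt (μ ^ 2 / (4 * s ^ 2)) ≤ Real.sqrt hi := Real.sqrt_le_sqrt h1
      rwa [show μ ^ 2 / (4 * s ^ 2) = (μ / (2 * s)) ^ 2 by ring,
        Real.sqrt_sq (by positivity)] at this
    have hshi' : μ / (2 * Real.sqrt hi) ≤ s := by
      rw [div_le_iff₀ (by positivity : (0:ℝ) < 2 * Real.sqrt hi)]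
      calc μ = (μ / (2 * s)) * (2 * s) := by field_simp
        _ ≤ Real.sqrt hi * (2 * s) := by
            apply mul_le_mul_of_nonneg_right hshi (by positivity)
        _ = s * (2 * Real.sqrt hi) := by ring
    have harcle : Real.arcsin (μ / (2 * Real.sqrt hi)) ≤ ε / 2 := by
      calc Real.arcsin (μ / (2 * Real.sqrt hi)) ≤ Real.arcsin s :=
            Real.monotone_arcsin hshi'
        _ = ε / 2 := by
            rw [hs]
            exact Real.arcsin_sin (by linarith [Real.pi_pos]) (by linarith)
    have : Real.sqrt 3 * (Real.pi / 2 - ε / 2) ≤ F hi := by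
      simp only [hF]
      apply mul_le_mul_of_nonneg_left _ hs3.le
      linarith
    have hkey : M ^ 2 < Real.sqrt 3 * (Real.pi / 2 - ε / 2) := by
      have hMε : Real.sqrt 3 * (Real.pi / 2 - ε) = M ^ 2 := by
        rw [hε]
        field_simp
        ring
      nlinarith [hs3, hεpos]
    linarith
  -- IVT
  have hIVT := intermediate_value_Icc hhi_gt.le (hcont.mono (Set.Icc_subset_Ici_self))
  have hmem : M ^ 2 ∈ Set.Icc (F lo) (F hi) := by
    rw [hFlo]
    exact ⟨by positivity, hFhi.le⟩
  obtain ⟨c, hc, hFc⟩ := hIVT hmem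
  have hclo : lo < c := by
    rcases lt_or_eq_of_le hc.1 with h | h
    · exact h
    · exfalso
      rw [← h, hFlo] at hFc
      have : (0:ℝ) < M ^ 2 := by positivity
      linarith [hFc]
  refine ⟨c, ⟨hclo, by rw [mass_formula μ hμ c hclo]; exact hFc⟩, ?_⟩
  rintro ω ⟨hω, hωeq⟩
  rw [mass_formula μ hμ ω hω] at hωeq
  have : F ω = F c := by rw [hFc]; exact hωeq
  exact hmono.injOn (Set.mem_Ici.2 hω.le) (Set.mem_Ici.2 hclo.le) this
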